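/- Invariant 2 (accumulated result correctness): with V_i defined as in the level-DAG Shift-And recursion, define R_t = ∃ i ≤ t, V_i[m-1]. Then R_{n-1} = true if and only if the pattern P (of length m) has at least one occurrence as the label of a path in G. -/

import Mathlib

/-- `MatchEnd E ℓ P j v` means there is a path in the graph ending at `v`
whose labels spell the prefix `P[0..j]`. -/
inductive MatchEnd {V σ : Type*} (E : V → V → Prop) (ℓ : V → σ) (P : ℕ → σ) : ℕ → V → Prop
  | zero (v : V) : ℓ v = P 0 → MatchEnd E ℓ P 0 v
  | succ (j : ℕ) (u v : V) : MatchEnd E ℓ P j u → E u v → ℓ v = P (j + 1) →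
      MatchEnd E ℓ P (j + 1) v

namespace MatchEnd

variable {V σ : Type*} {E : V → V → Prop} {ℓ : V → σ} {P : ℕ → σ}

theorem zero_iff {v : V} : MatchEnd E ℓ P 0 v ↔ ℓ v = P 0 :=
  ⟨fun | zero _ h => h, zero v⟩

theorem succ_iff {j : ℕ} {v : V} :
    MatchEnd E ℓ P (j + 1) v ↔ ℓ v = P (j + 1) ∧ ∃ u, MatchEnd E ℓ P j u ∧ E u v :=
  ⟨fun | succ _ u _ hu huv hv => ⟨hv, u, hu, huv⟩,
   fun ⟨hv, u, hu, huv⟩ => succ j u v hu huv hv⟩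

theorem iff_of_shiftAnd {Vq : V → ℕ → Bool}
    (hVq : ∀ (i : V) (j : ℕ),
      Vq i j = true ↔
        (P j = ℓ i ∧ (j = 0 ∨ (1 ≤ j ∧ ∃ k : V, E k i ∧ Vq k (j - 1) = true))))
    (j : ℕ) (v : V) : Vq v j = true ↔ MatchEnd E ℓ P j v := by
  induction j generalizing v with
  | zero => rw [hVq, zero_iff, eq_comm]; simp
  | succ j ih =>
    rw [hVq, succ_iff, eq_comm]
    simp [ih, and_comm]

end MatchEnd

theorem levelDAG_invariant2_general {σ : Type*} (n m : ℕ)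
    (E : Fin n → Fin n → Prop) (ℓ : Fin n → σ) (P : ℕ → σ)
    (Vq : Fin n → ℕ → Bool)
    (hVq : ∀ (i : Fin n) (j : ℕ),
      Vq i j = true ↔
        (P j = ℓ i ∧ (j = 0 ∨ (1 ≤ j ∧ ∃ k : Fin n, E k i ∧ Vq k (j - 1) = true)))) :
    (∃ i : Fin n, Vq i (m - 1) = true) ↔ (∃ v : Fin n, MatchEnd E ℓ P (m - 1) v) :=
  exists_congr (MatchEnd.iff_of_shiftAnd hVq (m - 1))

/-- Invariant 2: with `Vq` as in the level-DAG Shift-And recursion and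
`R_t = ∃ i ≤ t, Vq i (m-1)`, the final value `R_{n-1}` is true iff `P` (of length `m`)
occurs as the label of a path in `G`. -/
theorem levelDAG_invariant2 {σ : Type*} (n m : ℕ) (hm : 2 ≤ m)
    (E : Fin n → Fin n → Prop) (ℓ : Fin n → σ) (P : ℕ → σ)
    (htopo : ∀ u v : Fin n, E u v → (u : ℕ) < v)
    (Vq : Fin n → ℕ → Bool)
    (hVq : ∀ (i : Fin n) (j : ℕ),
      Vq i j = true ↔
        (P j = ℓ i ∧ (j = 0 ∨ (1 ≤ j ∧ ∃ k : Fin n, E k i ∧ Vq k (j - 1) = true)))) :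
    (∃ i : Fin n, Vq i (m - 1) = true) ↔ (∃ v : Fin n, MatchEnd E ℓ P (m - 1) v) :=
  levelDAG_invariant2_general n m E ℓ P Vq hVq
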